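/- arXiv:1704.05738 — 11 statements merged into one kernel-verified Lean document; each statement's English description precedes it below -/
import Mathlib

section
/- Assume the balance condition c1 + c5 = c2 + c4 + c7 = c3 + c6 and the η-equation H(2T/3 − η) = H(T/3 + η). Then (θ1, θ2) = (2T/3 − η, T/3 + η) is a fixed point of the phase-difference system, i.e. F1(2T/3 − η, T/3 + η) = 0 and F2(2T/3 − η, T/3 + η) = 0. -/
/-- Under the balance condition and the η-equation,
`(2T/3 − η, T/3 + η)` is a fixed point of the phase-difference system. -/
theorem stmt_0 (T : ℝ) (hT : 0 < T) (H : ℝ → ℝ)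
    (hHdiff : Differentiable ℝ H)
    (hper : ∀ θ : ℝ, H (θ + T) = H θ)
    (c1 c2 c3 c4 c5 c6 c7 η : ℝ)
    (hc1 : 0 < c1) (hc2 : 0 < c2) (hc3 : 0 < c3) (hc4 : 0 < c4)
    (hc5 : 0 < c5) (hc6 : 0 < c6) (hc7 : 0 < c7)
    (hη : η ∈ Set.Icc (0 : ℝ) (T / 6))
    (hbal1 : c1 + c5 = c2 + c4 + c7)
    (hbal2 : c2 + c4 + c7 = c3 + c6)
    (heta : H (2 * T / 3 - η) = H (T / 3 + η))
    (F1 F2 : ℝ → ℝ → ℝ)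
    (hF1 : ∀ θ1 θ2 : ℝ, F1 θ1 θ2 =
      (c1 - c2) * H (2 * T / 3 - η) + c5 * H (-θ1) - c4 * H θ1 - c7 * H θ2)
    (hF2 : ∀ θ1 θ2 : ℝ, F2 θ1 θ2 =
      (c3 - c2) * H (2 * T / 3 - η) + c6 * H (-θ2) - c4 * H θ1 - c7 * H θ2) :
    F1 (2 * T / 3 - η) (T / 3 + η) = 0 ∧ F2 (2 * T / 3 - η) (T / 3 + η) = 0 := by
  have h1 : H (-(2 * T / 3 - η)) = H (T / 3 + η) := by
    have := hper (-(2 * T / 3 - η))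
    rw [show -(2 * T / 3 - η) + T = T / 3 + η by ring] at this
    exact this.symm
  have h2 : H (-(T / 3 + η)) = H (2 * T / 3 - η) := by
    have := hper (-(T / 3 + η))
    rw [show -(T / 3 + η) + T = 2 * T / 3 - η by ring] at this
    exact this.symm
  constructor
  · rw [hF1, h1, ← heta]; linear_combination H (2 * T / 3 - η) * hbal1
  · rw [hF2, h2, ← heta]; linear_combination H (2 * T / 3 - η) * hbal2.symm
end

section
/- Assume the balance condition c1 + c5 = c2 + c4 + c7 = c3 + c6 and the η-equation H(2T/3 − η) = H(T/3 + η). Then the points (T/3 + η, T/3 + η), (T/3 + η, 2T/3 − η), and (2T/3 − η, 2T/3 − η) are all fixed points of the phase-difference system, i.e. F1 and F2 vanish at each of these three points. -/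
/-- Under the balance condition and the η-equation, the three points
`(T/3+η, T/3+η)`, `(T/3+η, 2T/3−η)`, `(2T/3−η, 2T/3−η)` are fixed points. -/
theorem stmt_2 (T : ℝ) (hT : 0 < T) (H : ℝ → ℝ)
    (hHdiff : Differentiable ℝ H)
    (hper : ∀ θ : ℝ, H (θ + T) = H θ)
    (c1 c2 c3 c4 c5 c6 c7 η : ℝ)
    (hc1 : 0 < c1) (hc2 : 0 < c2) (hc3 : 0 < c3) (hc4 : 0 < c4)
    (hc5 : 0 < c5) (hc6 : 0 < c6) (hc7 : 0 < c7)
    (hη : η ∈ Set.Icc (0 : ℝ) (T / 6))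
    (hbal1 : c1 + c5 = c2 + c4 + c7)
    (hbal2 : c2 + c4 + c7 = c3 + c6)
    (heta : H (2 * T / 3 - η) = H (T / 3 + η))
    (F1 F2 : ℝ → ℝ → ℝ)
    (hF1 : ∀ θ1 θ2 : ℝ, F1 θ1 θ2 =
      (c1 - c2) * H (2 * T / 3 - η) + c5 * H (-θ1) - c4 * H θ1 - c7 * H θ2)
    (hF2 : ∀ θ1 θ2 : ℝ, F2 θ1 θ2 =
      (c3 - c2) * H (2 * T / 3 - η) + c6 * H (-θ2) - c4 * H θ1 - c7 * H θ2) :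
    (F1 (T / 3 + η) (T / 3 + η) = 0 ∧ F2 (T / 3 + η) (T / 3 + η) = 0) ∧
    (F1 (T / 3 + η) (2 * T / 3 - η) = 0 ∧ F2 (T / 3 + η) (2 * T / 3 - η) = 0) ∧
    (F1 (2 * T / 3 - η) (2 * T / 3 - η) = 0 ∧ F2 (2 * T / 3 - η) (2 * T / 3 - η) = 0) := by
  have e1 : H (-(T / 3 + η)) = H (2 * T / 3 - η) := by
    have h := hper (-(T / 3 + η))
    rw [show -(T / 3 + η) + T = 2 * T / 3 - η by ring] at h
    exact h.symm
  have e2 : H (-(2 * T / 3 - η)) = H (2 * T / 3 - η) := by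
    have h := hper (-(2 * T / 3 - η))
    rw [show -(2 * T / 3 - η) + T = T / 3 + η by ring] at h
    rw [← heta] at h
    exact h.symm
  simp only [hF1, hF2, e1, e2, ← heta]
  refine ⟨⟨?_, ?_⟩, ⟨?_, ?_⟩, ⟨?_, ?_⟩⟩
  · linear_combination H (2 * T / 3 - η) * hbal1
  · linear_combination H (2 * T / 3 - η) * (hbal2.symm)
  · linear_combination H (2 * T / 3 - η) * hbal1
  · linear_combination H (2 * T / 3 - η) * (hbal2.symm)
  · linear_combination H (2 * T / 3 - η) * hbal1
  · linear_combination H (2 * T / 3 - η) * (hbal2.symm)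
end

section
/- Assume the balance condition c1 + c5 = c2 + c4 + c7 = c3 + c6 and the η-equation H(2T/3 − η) = H(T/3 + η), and set ω̂ = ω + (c1 + c5)·H(2T/3 − η). Then the forward-right transition gait A_FR(η), given by φ1(t) = ω̂·t + 2T/3 − η, φ2(t) = ω̂·t, φ3(t) = ω̂·t + T/3 + η, φ4(t) = ω̂·t + T/3 − 2η, φ5(t) = ω̂·t + 2T/3 − η, φ6(t) = ω̂·t, is a solution of the six-oscillator system: for all t, φ1'(t) = ω + c1·H(2T/3 − η) + c5·H(φ2(t) − φ1(t)); φ2'(t) = ω + c2·H(2T/3 − η) + c4·H(φ1(t) − φ2(t)) + c7·H(φ3(t) − φ2(t)); φ3'(t) = ω + c3·H(2T/3 − η) + c6·H(φ2(t) − φ3(t)); φ4'(t) = ω + c1·H(T/3 + η) + c5·H(φ5(t) − φ4(t)); φ5'(t) = ω + c2·H(T/3 + η) + c4·H(φ4(t) − φ5(t)) + c7·H(φ6(t) − φ5(t)); φ6'(t) = ω + c3·H(T/3 + η) + c6·H(φ5(t) − φ6(t)). -/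
/-- under the balance condition and the η-equation, with
`ω̂ = ω + (c1 + c5)·H(2T/3 − η)`, the forward-right transition gait `A_FR(η)`
solves the six-oscillator phase equations. -/
theorem stmt_3 (T : ℝ) (hT : 0 < T) (H : ℝ → ℝ)
    (hHdiff : Differentiable ℝ H)
    (hper : ∀ θ : ℝ, H (θ + T) = H θ)
    (c1 c2 c3 c4 c5 c6 c7 η ω : ℝ)
    (hc1 : 0 < c1) (hc2 : 0 < c2) (hc3 : 0 < c3) (hc4 : 0 < c4)
    (hc5 : 0 < c5) (hc6 : 0 < c6) (hc7 : 0 < c7)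
    (hη : η ∈ Set.Icc (0 : ℝ) (T / 6))
    (hbal1 : c1 + c5 = c2 + c4 + c7)
    (hbal2 : c2 + c4 + c7 = c3 + c6)
    (heta : H (2 * T / 3 - η) = H (T / 3 + η))
    (ωhat : ℝ) (hωhat : ωhat = ω + (c1 + c5) * H (2 * T / 3 - η))
    (φ1 φ2 φ3 φ4 φ5 φ6 : ℝ → ℝ)
    (hφ1 : ∀ t : ℝ, φ1 t = ωhat * t + 2 * T / 3 - η)
    (hφ2 : ∀ t : ℝ, φ2 t = ωhat * t)
    (hφ3 : ∀ t : ℝ, φ3 t = ωhat * t + T / 3 + η)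
    (hφ4 : ∀ t : ℝ, φ4 t = ωhat * t + T / 3 - 2 * η)
    (hφ5 : ∀ t : ℝ, φ5 t = ωhat * t + 2 * T / 3 - η)
    (hφ6 : ∀ t : ℝ, φ6 t = ωhat * t) :
    ∀ t : ℝ,
      HasDerivAt φ1 (ω + c1 * H (2 * T / 3 - η) + c5 * H (φ2 t - φ1 t)) t ∧
      HasDerivAt φ2 (ω + c2 * H (2 * T / 3 - η) + c4 * H (φ1 t - φ2 t)
        + c7 * H (φ3 t - φ2 t)) t ∧
      HasDerivAt φ3 (ω + c3 * H (2 * T / 3 - η) + c6 * H (φ2 t - φ3 t)) t ∧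
      HasDerivAt φ4 (ω + c1 * H (T / 3 + η) + c5 * H (φ5 t - φ4 t)) t ∧
      HasDerivAt φ5 (ω + c2 * H (T / 3 + η) + c4 * H (φ4 t - φ5 t)
        + c7 * H (φ6 t - φ5 t)) t ∧
      HasDerivAt φ6 (ω + c3 * H (T / 3 + η) + c6 * H (φ5 t - φ6 t)) t := by
  intro t
  have hlin : ∀ (f : ℝ → ℝ) (c : ℝ), (∀ s, f s = ωhat * s + c) →
      HasDerivAt f ωhat t := by
    intro f c hf
    have h := ((hasDerivAt_id t).const_mul ωhat).add_const c
    rw [mul_one] at h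
    simpa [funext hf] using h
  have hd1 : HasDerivAt φ1 ωhat t := hlin φ1 (2 * T / 3 - η)
    (fun s => by rw [hφ1 s]; ring)
  have hd2 : HasDerivAt φ2 ωhat t := hlin φ2 0 (fun s => by rw [hφ2 s]; ring)
  have hd3 : HasDerivAt φ3 ωhat t := hlin φ3 (T / 3 + η)
    (fun s => by rw [hφ3 s]; ring)
  have hd4 : HasDerivAt φ4 ωhat t := hlin φ4 (T / 3 - 2 * η)
    (fun s => by rw [hφ4 s]; ring)
  have hd5 : HasDerivAt φ5 ωhat t := hlin φ5 (2 * T / 3 - η)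
    (fun s => by rw [hφ5 s]; ring)
  have hd6 : HasDerivAt φ6 ωhat t := hlin φ6 0 (fun s => by rw [hφ6 s]; ring)
  have h21 : H (φ2 t - φ1 t) = H (2 * T / 3 - η) := by
    have e : φ2 t - φ1 t = (T / 3 + η) - T := by rw [hφ1 t, hφ2 t]; ring
    have e2 : (T / 3 + η - T) + T = T / 3 + η := by ring
    have h := hper (T / 3 + η - T); rw [e2] at h
    rw [e, ← h, ← heta]
  have h12 : H (φ1 t - φ2 t) = H (2 * T / 3 - η) := by
    have e : φ1 t - φ2 t = 2 * T / 3 - η := by rw [hφ1 t, hφ2 t]; ring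
    rw [e]
  have h32 : H (φ3 t - φ2 t) = H (2 * T / 3 - η) := by
    have e : φ3 t - φ2 t = T / 3 + η := by rw [hφ3 t, hφ2 t]; ring
    rw [e, ← heta]
  have h23 : H (φ2 t - φ3 t) = H (2 * T / 3 - η) := by
    have e : φ2 t - φ3 t = (2 * T / 3 - η) - T := by rw [hφ2 t, hφ3 t]; ring
    have e2 : (2 * T / 3 - η - T) + T = 2 * T / 3 - η := by ring
    have h := hper (2 * T / 3 - η - T); rw [e2] at h
    rw [e, ← h]
  have h54 : H (φ5 t - φ4 t) = H (2 * T / 3 - η) := by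
    have e : φ5 t - φ4 t = T / 3 + η := by rw [hφ5 t, hφ4 t]; ring
    rw [e, ← heta]
  have h45 : H (φ4 t - φ5 t) = H (2 * T / 3 - η) := by
    have e : φ4 t - φ5 t = (2 * T / 3 - η) - T := by rw [hφ4 t, hφ5 t]; ring
    have e2 : (2 * T / 3 - η - T) + T = 2 * T / 3 - η := by ring
    have h := hper (2 * T / 3 - η - T); rw [e2] at h
    rw [e, ← h]
  have h65 : H (φ6 t - φ5 t) = H (2 * T / 3 - η) := by
    have e : φ6 t - φ5 t = (T / 3 + η) - T := by rw [hφ6 t, hφ5 t]; ring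
    have e2 : (T / 3 + η - T) + T = T / 3 + η := by ring
    have h := hper (T / 3 + η - T); rw [e2] at h
    rw [e, ← h, ← heta]
  have h56 : H (φ5 t - φ6 t) = H (2 * T / 3 - η) := by
    have e : φ5 t - φ6 t = 2 * T / 3 - η := by rw [hφ5 t, hφ6 t]; ring
    rw [e]
  have hbal3 : c1 + c5 = c3 + c6 := hbal1.trans hbal2
  refine ⟨?_, ?_, ?_, ?_, ?_, ?_⟩
  · convert hd1 using 1; rw [h21, hωhat]; ring
  · convert hd2 using 1; rw [h12, h32, hωhat, hbal1]; ring
  · convert hd3 using 1; rw [h23, hωhat, hbal3]; ring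
  · convert hd4 using 1; rw [h54, ← heta, hωhat]; ring
  · convert hd5 using 1; rw [h45, h65, ← heta, hωhat, hbal1]; ring
  · convert hd6 using 1; rw [h56, ← heta, hωhat, hbal3]; ring
end

section
/- Write a = H'(2T/3 − η) and b = H'(T/3 + η). Using the T-periodicity of H, the eigenvalues of the Jacobian J3(2T/3 − η, T/3 + η) are λ1 = −a − b and λ2 = −(1 − α)·b − α·a. Assume a + b > 0 and a ≠ b, and set α_max = b/(b − a). If (α_max − α)·(b − a) > 0 then λ1 < 0 and λ2 < 0, so (2T/3 − η, T/3 + η) is a stable fixed point; if (α_max − α)·(b − a) < 0 then λ1 < 0 < λ2, so (2T/3 − η, T/3 + η) is a saddle point. -/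
open Matrix Polynomial

/-! By periodicity, `H'(-(2T/3 - η)) = b` and `H'(-(T/3 + η)) = a`, so the Jacobian is
`-!![b + α a, (1 - α) b; α a, a + (1 - α) b]`, whose trace and determinant are the sum and
product of `λ1 = -a - b` and `λ2 = -(1 - α) b - α a`. Since `(α_max - α)(b - a) = -λ2`, the
sign conditions on `(α_max - α)(b - a)` fix the sign of `λ2`, while `λ1 < 0` is `a + b > 0`. -/

theorem Function.Periodic.periodic_of_hasDerivAt {𝕜 F : Type*} [NontriviallyNormedField 𝕜]
    [NormedAddCommGroup F] [NormedSpace 𝕜 F] {f f' : 𝕜 → F} {c : 𝕜}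
    (hf : Function.Periodic f c) (hf' : ∀ x, HasDerivAt f (f' x) x) :
    Function.Periodic f' c := by
  intro x
  have hshift := (hf' (x + c)).comp_add_const x c
  rw [show (fun y => f (y + c)) = f from funext hf] at hshift
  exact hshift.unique (hf' x)

theorem Matrix.charpoly_fin_two_eq_mul {R : Type*} [CommRing R] [Nontrivial R]
    (M : Matrix (Fin 2) (Fin 2) R) {μ ν : R} (htr : M.trace = μ + ν) (hdet : M.det = μ * ν) :
    M.charpoly = (X - C μ) * (X - C ν) := by
  rw [charpoly_fin_two, htr, hdet, C_add, C_mul]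
  ring

theorem stmt_6_general (T : ℝ) (H H' : ℝ → ℝ)
    (hH' : ∀ x : ℝ, HasDerivAt H (H' x) x)
    (hper : ∀ θ : ℝ, H (θ + T) = H θ)
    (η : ℝ)
    (α : ℝ)
    (J3 : ℝ → ℝ → Matrix (Fin 2) (Fin 2) ℝ)
    (hJ3 : ∀ θ1 θ2 : ℝ, J3 θ1 θ2 =
      -!![H' (-θ1) + α * H' θ1, (1 - α) * H' θ2;
          α * H' θ1, H' (-θ2) + (1 - α) * H' θ2])
    (a b : ℝ) (ha : a = H' (2 * T / 3 - η)) (hb : b = H' (T / 3 + η))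
    (hab : 0 < a + b) (hne : a ≠ b)
    (αmax : ℝ) (hαmax : αmax = b / (b - a)) :
    (J3 (2 * T / 3 - η) (T / 3 + η)).charpoly =
      (Polynomial.X - Polynomial.C (-a - b)) *
      (Polynomial.X - Polynomial.C (-(1 - α) * b - α * a)) ∧
    (0 < (αmax - α) * (b - a) → (-a - b < 0 ∧ -(1 - α) * b - α * a < 0)) ∧
    ((αmax - α) * (b - a) < 0 → (-a - b < 0 ∧ 0 < -(1 - α) * b - α * a)) := by
  have hH'per : Function.Periodic H' T := Function.Periodic.periodic_of_hasDerivAt hper hH'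
  have hb' : H' (-(2 * T / 3 - η)) = b := by
    rw [hb, ← hH'per]; congr 1; ring
  have ha' : H' (-(T / 3 + η)) = a := by
    rw [ha, ← hH'per]; congr 1; ring
  have hJ : J3 (2 * T / 3 - η) (T / 3 + η) =
      -!![b + α * a, (1 - α) * b; α * a, a + (1 - α) * b] := by
    rw [hJ3, hb', ha', ← ha, ← hb]
  have hcharpoly := (J3 (2 * T / 3 - η) (T / 3 + η)).charpoly_fin_two_eq_mul
    (μ := -a - b) (ν := -(1 - α) * b - α * a)
    (by rw [hJ, trace_neg, trace_fin_two_of]; ring)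
    (by rw [hJ, det_neg, det_fin_two_of, Fintype.card_fin]; ring)
  have hsign : (αmax - α) * (b - a) = -(-(1 - α) * b - α * a) := by
    rw [hαmax]
    field_simp [sub_ne_zero.mpr hne.symm]
    ring
  exact ⟨hcharpoly, fun h => ⟨by linarith, by linarith⟩, fun h => ⟨by linarith, by linarith⟩⟩

/-- the eigenvalues of `J3(2T/3 − η, T/3 + η)` are
`λ1 = −a − b` and `λ2 = −(1 − α)·b − α·a`; stability criteria via `α_max`. -/
theorem stmt_6 (T : ℝ) (hT : 0 < T) (H H' : ℝ → ℝ)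
    (hH' : ∀ x : ℝ, HasDerivAt H (H' x) x)
    (hper : ∀ θ : ℝ, H (θ + T) = H θ)
    (η : ℝ) (hη : η ∈ Set.Icc (0 : ℝ) (T / 6))
    (α : ℝ) (hα0 : 0 < α) (hα1 : α < 1)
    (J3 : ℝ → ℝ → Matrix (Fin 2) (Fin 2) ℝ)
    (hJ3 : ∀ θ1 θ2 : ℝ, J3 θ1 θ2 =
      -!![H' (-θ1) + α * H' θ1, (1 - α) * H' θ2;
          α * H' θ1, H' (-θ2) + (1 - α) * H' θ2])
    (a b : ℝ) (ha : a = H' (2 * T / 3 - η)) (hb : b = H' (T / 3 + η))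
    (hab : 0 < a + b) (hne : a ≠ b)
    (αmax : ℝ) (hαmax : αmax = b / (b - a)) :
    (J3 (2 * T / 3 - η) (T / 3 + η)).charpoly =
      (Polynomial.X - Polynomial.C (-a - b)) *
      (Polynomial.X - Polynomial.C (-(1 - α) * b - α * a)) ∧
    (0 < (αmax - α) * (b - a) → (-a - b < 0 ∧ -(1 - α) * b - α * a < 0)) ∧
    ((αmax - α) * (b - a) < 0 → (-a - b < 0 ∧ 0 < -(1 - α) * b - α * a)) :=
  stmt_6_general T H H' hH' hper η α J3 hJ3 a b ha hb hab hne αmax hαmax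
end

section
/- Write a = H'(2T/3 − η) and b = H'(T/3 + η). Using the T-periodicity of H, the eigenvalues of the Jacobian J3(T/3 + η, T/3 + η) are λ1 = −a − b and λ2 = −a. If a + b > 0 and a < 0, then λ1 < 0 < λ2, so (T/3 + η, T/3 + η) is a saddle point, independent of the choice of α. -/
open Matrix Polynomial

/-- the eigenvalues of `J3(T/3 + η, T/3 + η)` are `−a − b` and `−a`;
if `a + b > 0` and `a < 0` then `(T/3 + η, T/3 + η)` is a saddle point,
independent of `α`. -/
theorem stmt_7 (T : ℝ) (hT : 0 < T) (H H' : ℝ → ℝ)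
    (hH' : ∀ x : ℝ, HasDerivAt H (H' x) x)
    (hper : ∀ θ : ℝ, H (θ + T) = H θ)
    (η : ℝ) (hη : η ∈ Set.Icc (0 : ℝ) (T / 6))
    (α : ℝ) (hα0 : 0 < α) (hα1 : α < 1)
    (J3 : ℝ → ℝ → Matrix (Fin 2) (Fin 2) ℝ)
    (hJ3 : ∀ θ1 θ2 : ℝ, J3 θ1 θ2 =
      -!![H' (-θ1) + α * H' θ1, (1 - α) * H' θ2;
          α * H' θ1, H' (-θ2) + (1 - α) * H' θ2])
    (a b : ℝ) (ha : a = H' (2 * T / 3 - η)) (hb : b = H' (T / 3 + η)) :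
    (J3 (T / 3 + η) (T / 3 + η)).charpoly =
      (Polynomial.X - Polynomial.C (-a - b)) * (Polynomial.X - Polynomial.C (-a)) ∧
    (0 < a + b → a < 0 → (-a - b < 0 ∧ 0 < -a)) := by
  have hper' : ∀ x : ℝ, H' (x + T) = H' x := by
    intro x
    have h1 : HasDerivAt (fun y => H (y + T)) (H' (x + T) * 1) x :=
      (hH' (x + T)).comp x ((hasDerivAt_id x).add_const T)
    have hf : (fun y : ℝ => H (y + T)) = H := funext hper
    rw [hf, mul_one] at h1
    exact h1.unique (hH' x)
  have h1 : H' (-(T / 3 + η)) = a := by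
    have := hper' (-(T / 3 + η))
    rw [ha]
    rw [show -(T / 3 + η) + T = 2 * T / 3 - η by ring] at this
    exact this.symm
  have h2 : H' (T / 3 + η) = b := hb.symm
  constructor
  · rw [hJ3, Matrix.charpoly, Matrix.det_fin_two]
    simp only [Matrix.charmatrix_apply_eq, Matrix.charmatrix_apply_ne _ _ _ (by decide : (0:Fin 2) ≠ 1),
      Matrix.charmatrix_apply_ne _ _ _ (by decide : (1:Fin 2) ≠ 0),
      Matrix.neg_apply, Matrix.cons_val', Matrix.cons_val_zero, Matrix.cons_val_one,
      Matrix.head_cons, Matrix.empty_val', Matrix.cons_val_fin_one, Matrix.of_apply, h1, h2]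
    simp only [Matrix.vecHead, map_neg, map_add, _root_.map_mul, map_sub, _root_.map_one]
    ring
  · intro hab hA
    constructor <;> linarith
end

section
/- Write a = H'(2T/3 − η) and b = H'(T/3 + η). Using the T-periodicity of H, the eigenvalues of the Jacobian J3(T/3 + η, 2T/3 − η) are λ1 = −a − b and λ2 = −(1 − α)·a − α·b. Assume a + b > 0 and a < 0, and set α_min = a/(a − b). If α > α_min then λ1 < 0 and λ2 < 0, so (T/3 + η, 2T/3 − η) (which corresponds to a backward tetrapod gait) is a sink; if α_min > 0 and α < α_min then λ1 < 0 < λ2, so it is a saddle point. -/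
/-!
By periodicity `H'(-(T/3 + η)) = a` and `H'(-(2T/3 - η)) = b`, so the Jacobian at the gait has
trace `-(a + b) - ((1 - α) a + α b)` and determinant equal to the product of these two
summands; this gives the factorization of its characteristic polynomial. The sign of
`-(1 - α) a - α b = α (a - b) - a` is decided by comparing `α` with `a / (a - b)`, where
`a - b < 0` because `a < 0 < a + b`.
-/

open Matrix Polynomial

theorem Function.Periodic.hasDerivAt_periodic {f f' : ℝ → ℝ} {T : ℝ} (hf : Function.Periodic f T)
    (hf' : ∀ x, HasDerivAt f (f' x) x) : Function.Periodic f' T := fun x => by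
  have h := (hf' (x + T)).comp_add_const x T
  rw [show (fun y => f (y + T)) = f from funext hf] at h
  exact h.unique (hf' x)

theorem charpoly_neg_coupling_matrix (α a b : ℝ) :
    (-!![a + α * b, (1 - α) * a; α * b, b + (1 - α) * a]).charpoly =
      (X - C (-a - b)) * (X - C (-(1 - α) * a - α * b)) := by
  apply charpoly_fin_two_eq_mul
  · simp only [trace_neg, trace_fin_two_of]
    ring
  · simp only [det_neg, Fintype.card_fin, det_fin_two_of]
    ring

theorem one_sub_mul_add_mul_pos_iff {α a b : ℝ} (hab : a < b) :
    0 < (1 - α) * a + α * b ↔ a / (a - b) < α := by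
  rw [div_lt_iff_of_neg (sub_neg.mpr hab)]
  constructor <;> intro h <;> linarith

theorem one_sub_mul_add_mul_neg_iff {α a b : ℝ} (hab : a < b) :
    (1 - α) * a + α * b < 0 ↔ α < a / (a - b) := by
  rw [lt_div_iff_of_neg (sub_neg.mpr hab)]
  constructor <;> intro h <;> linarith

theorem stmt_8_general (T : ℝ) (H H' : ℝ → ℝ)
    (hH' : ∀ x : ℝ, HasDerivAt H (H' x) x)
    (hper : ∀ θ : ℝ, H (θ + T) = H θ)
    (η : ℝ)
    (α : ℝ)
    (J3 : ℝ → ℝ → Matrix (Fin 2) (Fin 2) ℝ)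
    (hJ3 : ∀ θ1 θ2 : ℝ, J3 θ1 θ2 =
      -!![H' (-θ1) + α * H' θ1, (1 - α) * H' θ2;
          α * H' θ1, H' (-θ2) + (1 - α) * H' θ2])
    (a b : ℝ) (ha : a = H' (2 * T / 3 - η)) (hb : b = H' (T / 3 + η))
    (hab : 0 < a + b) (haneg : a < 0)
    (αmin : ℝ) (hαmin : αmin = a / (a - b)) :
    (J3 (T / 3 + η) (2 * T / 3 - η)).charpoly =
      (Polynomial.X - Polynomial.C (-a - b)) *
      (Polynomial.X - Polynomial.C (-(1 - α) * a - α * b)) ∧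
    (αmin < α → (-a - b < 0 ∧ -(1 - α) * a - α * b < 0)) ∧
    ((0 < αmin ∧ α < αmin) → (-a - b < 0 ∧ 0 < -(1 - α) * a - α * b)) := by
  have hper' : Function.Periodic H' T := Function.Periodic.hasDerivAt_periodic hper hH'
  have hneg₁ : H' (-(T / 3 + η)) = a := by rw [ha, ← hper']; ring_nf
  have hneg₂ : H' (-(2 * T / 3 - η)) = b := by rw [hb, ← hper']; ring_nf
  have hlt : a < b := by linarith
  subst hαmin
  refine ⟨?_, fun h => ⟨by linarith, ?_⟩, fun h => ⟨by linarith, ?_⟩⟩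
  · rw [hJ3, hneg₁, hneg₂, ← ha, ← hb]
    exact charpoly_neg_coupling_matrix α a b
  · linarith [(one_sub_mul_add_mul_pos_iff hlt).mpr h]
  · linarith [(one_sub_mul_add_mul_neg_iff hlt).mpr h.2]

/-- the eigenvalues of `J3(T/3 + η, 2T/3 − η)` are `−a − b` and
`−(1 − α)·a − α·b`; with `a + b > 0`, `a < 0` and `α_min = a/(a − b)`, the point
(a backward tetrapod gait) is a sink if `α > α_min`, and a saddle if
`α_min > 0` and `α < α_min`. -/
theorem stmt_8 (T : ℝ) (hT : 0 < T) (H H' : ℝ → ℝ)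
    (hH' : ∀ x : ℝ, HasDerivAt H (H' x) x)
    (hper : ∀ θ : ℝ, H (θ + T) = H θ)
    (η : ℝ) (hη : η ∈ Set.Icc (0 : ℝ) (T / 6))
    (α : ℝ) (hα0 : 0 < α) (hα1 : α < 1)
    (J3 : ℝ → ℝ → Matrix (Fin 2) (Fin 2) ℝ)
    (hJ3 : ∀ θ1 θ2 : ℝ, J3 θ1 θ2 =
      -!![H' (-θ1) + α * H' θ1, (1 - α) * H' θ2;
          α * H' θ1, H' (-θ2) + (1 - α) * H' θ2])
    (a b : ℝ) (ha : a = H' (2 * T / 3 - η)) (hb : b = H' (T / 3 + η))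
    (hab : 0 < a + b) (haneg : a < 0)
    (αmin : ℝ) (hαmin : αmin = a / (a - b)) :
    (J3 (T / 3 + η) (2 * T / 3 - η)).charpoly =
      (Polynomial.X - Polynomial.C (-a - b)) *
      (Polynomial.X - Polynomial.C (-(1 - α) * a - α * b)) ∧
    (αmin < α → (-a - b < 0 ∧ -(1 - α) * a - α * b < 0)) ∧
    ((0 < αmin ∧ α < αmin) → (-a - b < 0 ∧ 0 < -(1 - α) * a - α * b)) :=
  stmt_8_general T H H' hH' hper η α J3 hJ3 a b ha hb hab haneg αmin hαmin
end

section
/- Write a = H'(2T/3 − η) and b = H'(T/3 + η). Using the T-periodicity of H, the eigenvalues of the Jacobian J3(2T/3 − η, 2T/3 − η) are λ1 = −a − b and λ2 = −b. If a + b > 0 and a < 0, then b > 0 and both eigenvalues are negative, so (2T/3 − η, 2T/3 − η) is a sink, independent of the choice of α. -/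
open Matrix Polynomial

/-!
The derivative of a `T`-periodic function is `T`-periodic, so `H'(-(2T/3 - η)) = H'(T/3 + η) = b`
and the Jacobian at the diagonal point is `-(b • 1 + a • P)` with `P = !![α, 1 - α; α, 1 - α]`.
Since `P` is an idempotent of rank one, its eigenvalues are `1` and `0` whatever `α` is, which gives
the eigenvalues `-a - b` and `-b`; their signs then follow by linear arithmetic.
-/

theorem Function.Periodic.periodic_of_hasDerivAt_s9 {H H' : ℝ → ℝ} {T : ℝ}
    (hper : Function.Periodic H T) (hH' : ∀ x, HasDerivAt H (H' x) x) :
    Function.Periodic H' T := fun x => by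
  have h := (hH' (x + T)).comp_add_const x T
  rw [show (fun y => H (y + T)) = H from funext hper] at h
  exact h.unique (hH' x)

theorem Matrix.charpoly_neg_coupling_fin_two {R : Type*} [CommRing R] [Nontrivial R]
    (α a b : R) :
    (-!![b + α * a, (1 - α) * a; α * a, b + (1 - α) * a]).charpoly =
      (X - C (-a - b)) * (X - C (-b)) := by
  rw [neg_of, charpoly_fin_two, trace_fin_two, det_fin_two]
  simp only [of_apply, cons_val_zero, cons_val_one, cons_val_fin_one, Pi.neg_apply,
    map_neg, map_add, map_sub, map_mul, map_one]
  ring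

theorem stmt_9_general (T : ℝ) (H H' : ℝ → ℝ)
    (hH' : ∀ x : ℝ, HasDerivAt H (H' x) x)
    (hper : ∀ θ : ℝ, H (θ + T) = H θ)
    (η : ℝ)
    (α : ℝ)
    (J3 : ℝ → ℝ → Matrix (Fin 2) (Fin 2) ℝ)
    (hJ3 : ∀ θ1 θ2 : ℝ, J3 θ1 θ2 =
      -!![H' (-θ1) + α * H' θ1, (1 - α) * H' θ2;
          α * H' θ1, H' (-θ2) + (1 - α) * H' θ2])
    (a b : ℝ) (ha : a = H' (2 * T / 3 - η)) (hb : b = H' (T / 3 + η)) :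
    (J3 (2 * T / 3 - η) (2 * T / 3 - η)).charpoly =
      (Polynomial.X - Polynomial.C (-a - b)) * (Polynomial.X - Polynomial.C (-b)) ∧
    (0 < a + b → a < 0 → (0 < b ∧ -a - b < 0 ∧ -b < 0)) := by
  have hb' : H' (-(2 * T / 3 - η)) = b := by
    rw [← Function.Periodic.periodic_of_hasDerivAt_s9 hper hH', hb]
    congr 1; ring
  refine ⟨?_, fun hab ha0 => ⟨by linarith, by linarith, by linarith⟩⟩
  rw [hJ3, hb', ← ha]
  exact charpoly_neg_coupling_fin_two α a b

/-- the eigenvalues of `J3(2T/3 − η, 2T/3 − η)` are `−a − b` and `−b`;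
if `a + b > 0` and `a < 0` then `b > 0` and both eigenvalues are negative,
so the point is a sink, independent of `α`. -/
theorem stmt_9 (T : ℝ) (hT : 0 < T) (H H' : ℝ → ℝ)
    (hH' : ∀ x : ℝ, HasDerivAt H (H' x) x)
    (hper : ∀ θ : ℝ, H (θ + T) = H θ)
    (η : ℝ) (hη : η ∈ Set.Icc (0 : ℝ) (T / 6))
    (α : ℝ) (hα0 : 0 < α) (hα1 : α < 1)
    (J3 : ℝ → ℝ → Matrix (Fin 2) (Fin 2) ℝ)
    (hJ3 : ∀ θ1 θ2 : ℝ, J3 θ1 θ2 =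
      -!![H' (-θ1) + α * H' θ1, (1 - α) * H' θ2;
          α * H' θ1, H' (-θ2) + (1 - α) * H' θ2])
    (a b : ℝ) (ha : a = H' (2 * T / 3 - η)) (hb : b = H' (T / 3 + η)) :
    (J3 (2 * T / 3 - η) (2 * T / 3 - η)).charpoly =
      (Polynomial.X - Polynomial.C (-a - b)) * (Polynomial.X - Polynomial.C (-b)) ∧
    (0 < a + b → a < 0 → (0 < b ∧ -a - b < 0 ∧ -b < 0)) :=
  stmt_9_general T H H' hH' hper η α J3 hJ3 a b ha hb
end

section
/- The point (T/2, T/2) is a fixed point of the simplified phase-difference system, i.e. G1(T/2, T/2) = 0 and G2(T/2, T/2) = 0 (using the T-periodicity of H), and the eigenvalues of the Jacobian J3(T/2, T/2) are −H'(T/2) and −2·H'(T/2). Consequently, if H'(T/2) < 0 then both eigenvalues are positive and (T/2, T/2) is a source, while if H'(T/2) > 0 then both eigenvalues are negative and (T/2, T/2) (which corresponds to the tripod gait) is a sink. -/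
open Matrix Polynomial

/-- `(T/2, T/2)` is a fixed point of the simplified system, the
eigenvalues of `J3(T/2, T/2)` are `−H'(T/2)` and `−2·H'(T/2)`, and it is a source
when `H'(T/2) < 0` and a sink (the tripod gait) when `H'(T/2) > 0`. -/
theorem stmt_10 (T : ℝ) (hT : 0 < T) (H H' : ℝ → ℝ)
    (hH' : ∀ x : ℝ, HasDerivAt H (H' x) x)
    (hper : ∀ θ : ℝ, H (θ + T) = H θ)
    (α : ℝ) (hα0 : 0 < α) (hα1 : α < 1)
    (G1 G2 : ℝ → ℝ → ℝ)
    (hG1 : ∀ θ1 θ2 : ℝ, G1 θ1 θ2 = H (-θ1) - α * H θ1 - (1 - α) * H θ2)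
    (hG2 : ∀ θ1 θ2 : ℝ, G2 θ1 θ2 = H (-θ2) - α * H θ1 - (1 - α) * H θ2)
    (J3 : ℝ → ℝ → Matrix (Fin 2) (Fin 2) ℝ)
    (hJ3 : ∀ θ1 θ2 : ℝ, J3 θ1 θ2 =
      -!![H' (-θ1) + α * H' θ1, (1 - α) * H' θ2;
          α * H' θ1, H' (-θ2) + (1 - α) * H' θ2]) :
    (G1 (T / 2) (T / 2) = 0 ∧ G2 (T / 2) (T / 2) = 0) ∧
    (J3 (T / 2) (T / 2)).charpoly =
      (Polynomial.X - Polynomial.C (-H' (T / 2))) *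
      (Polynomial.X - Polynomial.C (-2 * H' (T / 2))) ∧
    (H' (T / 2) < 0 → (0 < -H' (T / 2) ∧ 0 < -2 * H' (T / 2))) ∧
    (0 < H' (T / 2) → (-H' (T / 2) < 0 ∧ -2 * H' (T / 2) < 0)) := by
  have hHval : H (-(T / 2)) = H (T / 2) := by
    have h0 := hper (-(T / 2))
    have h2 : -(T / 2) + T = T / 2 := by ring
    rw [h2] at h0; exact h0.symm
  have hH'per : ∀ x : ℝ, H' (x + T) = H' x := by
    intro x
    have h1 : HasDerivAt H (H' (x + T)) x := by
      have h := (hH' (x + T)).comp x ((hasDerivAt_id x).add_const T)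
      have heq : (fun y => H (y + T)) = H := funext hper
      simp only [Function.comp_def, id, mul_one, heq] at h
      exact h
    exact (h1.unique (hH' x))
  have hH'val : H' (-(T / 2)) = H' (T / 2) := by
    have h0 := hH'per (-(T / 2))
    have h2 : -(T / 2) + T = T / 2 := by ring
    rw [h2] at h0; exact h0.symm
  refine ⟨⟨?_, ?_⟩, ?_, ?_, ?_⟩
  · rw [hG1, hHval]; ring
  · rw [hG2, hHval]; ring
  · rw [hJ3, Matrix.charpoly, Matrix.det_fin_two]
    simp [charmatrix_apply, Matrix.scalar_apply, hH'val, _root_.map_mul,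
      _root_.map_neg, map_ofNat]
    ring
  · intro h; constructor <;> linarith
  · intro h; constructor <;> linarith
end

section
/- The point (0, 0) is a fixed point of the simplified phase-difference system, i.e. G1(0, 0) = 0 and G2(0, 0) = 0, and the eigenvalues of the Jacobian J3(0, 0) are −H'(0) and −2·H'(0). Consequently, if H'(0) < 0 then both eigenvalues are positive and (0, 0) is a source. -/
open Matrix Polynomial

/-- `(0, 0)` is a fixed point of the simplified system, the eigenvalues
of `J3(0, 0)` are `−H'(0)` and `−2·H'(0)`, and it is a source when `H'(0) < 0`. -/
theorem stmt_11 (T : ℝ) (hT : 0 < T) (H H' : ℝ → ℝ)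
    (hH' : ∀ x : ℝ, HasDerivAt H (H' x) x)
    (hper : ∀ θ : ℝ, H (θ + T) = H θ)
    (α : ℝ) (hα0 : 0 < α) (hα1 : α < 1)
    (G1 G2 : ℝ → ℝ → ℝ)
    (hG1 : ∀ θ1 θ2 : ℝ, G1 θ1 θ2 = H (-θ1) - α * H θ1 - (1 - α) * H θ2)
    (hG2 : ∀ θ1 θ2 : ℝ, G2 θ1 θ2 = H (-θ2) - α * H θ1 - (1 - α) * H θ2)
    (J3 : ℝ → ℝ → Matrix (Fin 2) (Fin 2) ℝ)
    (hJ3 : ∀ θ1 θ2 : ℝ, J3 θ1 θ2 =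
      -!![H' (-θ1) + α * H' θ1, (1 - α) * H' θ2;
          α * H' θ1, H' (-θ2) + (1 - α) * H' θ2]) :
    (G1 0 0 = 0 ∧ G2 0 0 = 0) ∧
    (J3 0 0).charpoly =
      (Polynomial.X - Polynomial.C (-H' 0)) *
      (Polynomial.X - Polynomial.C (-2 * H' 0)) ∧
    (H' 0 < 0 → (0 < -H' 0 ∧ 0 < -2 * H' 0)) := by
  refine ⟨⟨by rw [hG1]; norm_num; ring, by rw [hG2]; norm_num; ring⟩, ?_, fun h => ⟨by linarith, by linarith⟩⟩
  rw [hJ3]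
  rw [Matrix.charpoly, Matrix.det_fin_two]
  simp [Matrix.charmatrix_apply_eq, Matrix.charmatrix_apply_ne]
  ring_nf
  simp only [map_ofNat]
  ring
end

section
/- Under assumptions (1), (2), (3), the function θ̂ is strictly increasing on (ξ̄, ξ*): for all x1, x2 ∈ (ξ̄, ξ*) with x1 < x2, one has θ̂(x1) < θ̂(x2). -/
/-!
Let `x₁ < x₂` and `tᵢ = θ̂(xᵢ)`. Since `G(t₁; ·)` is strictly decreasing, `G(t₁; x₂) < G(t₁; x₁) = 0`.
On the other hand `G(·; x₂)` vanishes at `t₂` and, by periodicity and oddness, at `T/2`; being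
strictly concave on `[t₂, T/2]`, it is nonnegative there. Hence `t₁ < t₂`.
-/

open Set

theorem strictAntiOn_of_forall_deriv_neg {D : Set ℝ} (hD : Convex ℝ D) {f : ℝ → ℝ}
    (hf' : ∀ x ∈ D, deriv f x < 0) : StrictAntiOn f D :=
  strictAntiOn_of_deriv_neg hD
    (fun x hx => (differentiableAt_of_deriv_ne_zero (hf' x hx).ne).continuousAt.continuousWithinAt)
    fun x hx => hf' x (interior_subset hx)

theorem StrictConcaveOn.lt_left_of_neg {f : ℝ → ℝ} {a b c : ℝ}
    (hf : StrictConcaveOn ℝ (Icc a b) f) (ha : f a = 0) (hb : f b = 0) (hcb : c < b)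
    (hc : f c < 0) : c < a := by
  by_contra! hac
  rcases hac.eq_or_lt with rfl | hac
  · exact hc.ne ha
  have hab : a < b := hac.trans hcb
  have hpos := hf.lt_on_openSegment (left_mem_Icc.2 hab.le) (right_mem_Icc.2 hab.le) hab.ne
    (by rw [openSegment_eq_Ioo hab]; exact ⟨hac, hcb⟩)
  rw [ha, hb, min_self] at hpos
  exact hc.not_gt hpos

theorem stmt_15_general (T ξ1 ξ2 : ℝ)
    (H : ℝ → ℝ → ℝ)
    (hC2 : ∀ ξ ∈ Set.Icc ξ1 ξ2, ContDiff ℝ 2 (fun θ : ℝ => H θ ξ))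
    (hper : ∀ ξ ∈ Set.Icc ξ1 ξ2, ∀ θ : ℝ, H (θ + T) ξ = H θ ξ)
    (G : ℝ → ℝ → ℝ)
    (hG : ∀ θ ξ : ℝ, G θ ξ = H θ ξ - H (-θ) ξ)
    (ξb : ℝ) (hξb : ξb ∈ Set.Ico ξ1 ξ2)
    (h2 : ∀ ξ ∈ Set.Ioc ξb ξ2, ∀ θ ∈ Set.Ico (T / 3) (T / 2),
      deriv (fun x : ℝ => G θ x) ξ < 0)
    (ξs : ℝ) (hξs : ξs ∈ Set.Ioc ξb ξ2)
    (h3 : ∀ θ ∈ Set.Ioo (T / 3) (T / 2), ∀ ξ ∈ Set.Ioo ξb ξs,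
      deriv (deriv (fun t : ℝ => G t ξ)) θ < 0)
    (θhat : ℝ → ℝ)
    (hθhat : ∀ ξ ∈ Set.Ioo ξb ξs,
      θhat ξ ∈ Set.Ioo (T / 3) (T / 2) ∧ G (θhat ξ) ξ = 0) :
    ∀ x1 ∈ Set.Ioo ξb ξs, ∀ x2 ∈ Set.Ioo ξb ξs, x1 < x2 → θhat x1 < θhat x2 := by
  intro x1 hx1 x2 hx2 hlt
  obtain ⟨ht1, hG1⟩ := hθhat x1 hx1
  obtain ⟨ht2, hG2⟩ := hθhat x2 hx2
  have hx2' : x2 ∈ Icc ξ1 ξ2 := ⟨hξb.1.trans hx2.1.le, hx2.2.le.trans hξs.2⟩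
  have hhalf : G (T / 2) x2 = 0 := by
    have hH : Function.Periodic (fun θ => H θ x2) T := hper x2 hx2'
    have := hH.sub_eq (T / 2)
    rw [show T / 2 - T = -(T / 2) by ring] at this
    rw [hG, this, sub_self]
  have hneg : G (θhat x1) x2 < 0 := by
    have hanti : StrictAntiOn (G (θhat x1)) (Icc x1 x2) :=
      strictAntiOn_of_forall_deriv_neg (convex_Icc _ _) fun ξ hξ =>
        h2 ξ ⟨hx1.1.trans_le hξ.1, hξ.2.trans (hx2.2.le.trans hξs.2)⟩ _ ⟨ht1.1.le, ht1.2⟩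
    simpa [hG1] using hanti (left_mem_Icc.2 hlt.le) (right_mem_Icc.2 hlt.le) hlt
  have hconc : StrictConcaveOn ℝ (Icc (θhat x2) (T / 2)) (fun t => G t x2) := by
    refine strictConcaveOn_of_deriv2_neg (convex_Icc _ _) ?_ fun θ hθ => ?_
    · have hH := (hC2 x2 hx2').continuous
      simp_rw [hG]
      exact (hH.sub (hH.comp continuous_neg)).continuousOn
    · rw [interior_Icc] at hθ
      exact h3 θ ⟨ht2.1.trans hθ.1, hθ.2⟩ x2 hx2
  exact hconc.lt_left_of_neg hG2 hhalf ht1.2 hneg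

/-- under assumptions (1), (2), (3), the function `θ̂` (the unique
zero of `G(·; ξ)` in `(T/3, T/2)`) is strictly increasing on `(ξ̄, ξ*)`. -/
theorem stmt_15 (T ξ1 ξ2 : ℝ) (hT : 0 < T) (hξ12 : ξ1 < ξ2)
    (H : ℝ → ℝ → ℝ)
    (hC2 : ∀ ξ ∈ Set.Icc ξ1 ξ2, ContDiff ℝ 2 (fun θ : ℝ => H θ ξ))
    (hper : ∀ ξ ∈ Set.Icc ξ1 ξ2, ∀ θ : ℝ, H (θ + T) ξ = H θ ξ)
    (hC1 : ∀ θ : ℝ, ContDiffOn ℝ 1 (fun ξ : ℝ => H θ ξ) (Set.Icc ξ1 ξ2))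
    (G : ℝ → ℝ → ℝ)
    (hG : ∀ θ ξ : ℝ, G θ ξ = H θ ξ - H (-θ) ξ)
    (ξb : ℝ) (hξb : ξb ∈ Set.Ico ξ1 ξ2)
    (h1 : G (T / 3) ξb = 0)
    (h2 : ∀ ξ ∈ Set.Ioc ξb ξ2, ∀ θ ∈ Set.Ico (T / 3) (T / 2),
      deriv (fun x : ℝ => G θ x) ξ < 0)
    (ξs : ℝ) (hξs : ξs ∈ Set.Ioc ξb ξ2)
    (h3 : ∀ θ ∈ Set.Ioo (T / 3) (T / 2), ∀ ξ ∈ Set.Ioo ξb ξs,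
      deriv (deriv (fun t : ℝ => G t ξ)) θ < 0)
    (θhat : ℝ → ℝ)
    (hθhat : ∀ ξ ∈ Set.Ioo ξb ξs,
      θhat ξ ∈ Set.Ioo (T / 3) (T / 2) ∧ G (θhat ξ) ξ = 0) :
    ∀ x1 ∈ Set.Ioo ξb ξs, ∀ x2 ∈ Set.Ioo ξb ξs, x1 < x2 → θhat x1 < θhat x2 :=
  stmt_15_general T ξ1 ξ2 H hC2 hper G hG ξb hξb h2 ξs hξs h3 θhat hθhat
end

section
/- Under assumptions (1), (2), (3), the function θ̂ is continuous on (ξ̄, ξ*): for every x1 ∈ (ξ̄, ξ*) and every ε > 0 there exists δ > 0 such that for all x2 ∈ (ξ̄, ξ*) with |x1 − x2| < δ, one has |θ̂(x1) − θ̂(x2)| < ε. -/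
/-- under assumptions (1), (2), (3), the function `θ̂` (the unique
zero of `G(·; ξ)` in `(T/3, T/2)`) is continuous on `(ξ̄, ξ*)`. -/
theorem stmt_16 (T ξ1 ξ2 : ℝ) (hT : 0 < T) (hξ12 : ξ1 < ξ2)
    (H : ℝ → ℝ → ℝ)
    (hC2 : ∀ ξ ∈ Set.Icc ξ1 ξ2, ContDiff ℝ 2 (fun θ : ℝ => H θ ξ))
    (hper : ∀ ξ ∈ Set.Icc ξ1 ξ2, ∀ θ : ℝ, H (θ + T) ξ = H θ ξ)
    (hC1 : ∀ θ : ℝ, ContDiffOn ℝ 1 (fun ξ : ℝ => H θ ξ) (Set.Icc ξ1 ξ2))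
    (G : ℝ → ℝ → ℝ)
    (hG : ∀ θ ξ : ℝ, G θ ξ = H θ ξ - H (-θ) ξ)
    (ξb : ℝ) (hξb : ξb ∈ Set.Ico ξ1 ξ2)
    (h1 : G (T / 3) ξb = 0)
    (h2 : ∀ ξ ∈ Set.Ioc ξb ξ2, ∀ θ ∈ Set.Ico (T / 3) (T / 2),
      deriv (fun x : ℝ => G θ x) ξ < 0)
    (ξs : ℝ) (hξs : ξs ∈ Set.Ioc ξb ξ2)
    (h3 : ∀ θ ∈ Set.Ioo (T / 3) (T / 2), ∀ ξ ∈ Set.Ioo ξb ξs,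
      deriv (deriv (fun t : ℝ => G t ξ)) θ < 0)
    (θhat : ℝ → ℝ)
    (hθhat : ∀ ξ ∈ Set.Ioo ξb ξs,
      θhat ξ ∈ Set.Ioo (T / 3) (T / 2) ∧ G (θhat ξ) ξ = 0) :
    ∀ x1 ∈ Set.Ioo ξb ξs, ∀ ε > (0 : ℝ), ∃ δ > (0 : ℝ),
      ∀ x2 ∈ Set.Ioo ξb ξs, |x1 - x2| < δ → |θhat x1 - θhat x2| < ε := by
  have ht3 : T / 3 < T / 2 := by linarith
  have hξmem : ∀ ξ ∈ Set.Ioo ξb ξs, ξ ∈ Set.Icc ξ1 ξ2 := fun ξ h =>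
    ⟨le_trans hξb.1 h.1.le, le_trans h.2.le hξs.2⟩
  -- G(·, ξ) is C²
  have hf2 : ∀ ξ ∈ Set.Icc ξ1 ξ2, ContDiff ℝ 2 (fun t : ℝ => G t ξ) := by
    intro ξ hξ
    have e : (fun t : ℝ => G t ξ) = fun t : ℝ => H t ξ - H (-t) ξ :=
      funext fun t => hG t ξ
    rw [e]
    exact (hC2 ξ hξ).sub ((hC2 ξ hξ).comp contDiff_neg)
  -- G(T/2, ξ) = 0
  have hT2 : ∀ ξ ∈ Set.Icc ξ1 ξ2, G (T / 2) ξ = 0 := by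
    intro ξ hξ
    have hp := hper ξ hξ (-(T / 2))
    have he : -(T / 2) + T = T / 2 := by ring
    rw [he] at hp
    rw [hG, hp, sub_self]
  -- sign structure of G(·, ξ) around the zero θhat ξ
  have hsign : ∀ ξ ∈ Set.Ioo ξb ξs, ∀ t ∈ Set.Ioo (T / 3) (T / 2),
      (t < θhat ξ → G t ξ < 0) ∧ (θhat ξ < t → 0 < G t ξ) := by
    intro ξ hξ
    obtain ⟨hbmem, hb0⟩ := hθhat ξ hξ
    have hicc := hξmem ξ hξ
    have hf2' := hf2 ξ hicc
    have hT2' := hT2 ξ hicc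
    obtain ⟨c, hc, hc0⟩ :=
      exists_deriv_eq_zero hbmem.2 hf2'.continuous.continuousOn (hb0.trans hT2'.symm)
    have hanti : StrictAntiOn (deriv fun t : ℝ => G t ξ) (Set.Icc (T / 3) (T / 2)) :=
      strictAntiOn_of_deriv_neg (convex_Icc _ _)
        (hf2'.continuous_deriv one_le_two).continuousOn
        (by rw [interior_Icc]; exact fun x hx => h3 x hx ξ hξ)
    have hcmem : c ∈ Set.Icc (T / 3) (T / 2) :=
      ⟨le_trans hbmem.1.le hc.1.le, hc.2.le⟩
    have hmono : StrictMonoOn (fun t : ℝ => G t ξ) (Set.Icc (T / 3) c) :=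
      strictMonoOn_of_deriv_pos (convex_Icc _ _) hf2'.continuous.continuousOn
        (by
          rw [interior_Icc]
          intro x hx
          have hxm : x ∈ Set.Icc (T / 3) (T / 2) :=
            ⟨hx.1.le, le_trans hx.2.le hcmem.2⟩
          have := hanti hxm hcmem hx.2
          rw [hc0] at this
          exact this)
    have hanti2 : StrictAntiOn (fun t : ℝ => G t ξ) (Set.Icc c (T / 2)) :=
      strictAntiOn_of_deriv_neg (convex_Icc _ _) hf2'.continuous.continuousOn
        (by
          rw [interior_Icc]
          intro x hx
          have hxm : x ∈ Set.Icc (T / 3) (T / 2) :=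
            ⟨le_trans hcmem.1 hx.1.le, hx.2.le⟩
          have := hanti hcmem hxm hx.1
          rw [hc0] at this
          exact this)
    intro t ht
    constructor
    · intro hlt
      have h1m : t ∈ Set.Icc (T / 3) c := ⟨ht.1.le, le_trans hlt.le hc.1.le⟩
      have h2m : θhat ξ ∈ Set.Icc (T / 3) c := ⟨hbmem.1.le, hc.1.le⟩
      have := hmono h1m h2m hlt
      simpa [hb0] using this
    · intro hlt
      rcases le_or_gt t c with hle | hgt
      · have h1m : θhat ξ ∈ Set.Icc (T / 3) c := ⟨hbmem.1.le, hc.1.le⟩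
        have h2m : t ∈ Set.Icc (T / 3) c := ⟨ht.1.le, hle⟩
        have := hmono h1m h2m hlt
        simpa [hb0] using this
      · have h1m : t ∈ Set.Icc c (T / 2) := ⟨hgt.le, ht.2.le⟩
        have h2m : (T / 2) ∈ Set.Icc c (T / 2) := ⟨hcmem.2, le_refl _⟩
        have := hanti2 h1m h2m ht.2
        simpa [hT2'] using this
  -- main continuity argument
  intro x1 hx1 ε hε
  obtain ⟨ha, ha0⟩ := hθhat x1 hx1
  set a := θhat x1 with hadef
  set l : ℝ := (max (T / 3) (a - ε) + a) / 2 with hl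
  set u : ℝ := (a + min (T / 2) (a + ε)) / 2 with hu
  have hl1 : T / 3 < l := by
    have : T / 3 ≤ max (T / 3) (a - ε) := le_max_left _ _
    have h1 : max (T / 3) (a - ε) < a := max_lt ha.1 (by linarith)
    simp only [hl]; nlinarith [le_max_left (T / 3) (a - ε)]
  have hl2 : l < a := by
    have h1 : max (T / 3) (a - ε) < a := max_lt ha.1 (by linarith)
    simp only [hl]; linarith
  have hl3 : a - ε < l := by
    have : a - ε ≤ max (T / 3) (a - ε) := le_max_right _ _
    simp only [hl]; linarith
  have hu1 : a < u := by
    have h1 : a < min (T / 2) (a + ε) := lt_min ha.2 (by linarith)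
    simp only [hu]; linarith
  have hu2 : u < T / 2 := by
    have : min (T / 2) (a + ε) ≤ T / 2 := min_le_left _ _
    simp only [hu]; linarith [ha.2]
  have hu3 : u < a + ε := by
    have : min (T / 2) (a + ε) ≤ a + ε := min_le_right _ _
    simp only [hu]; linarith [ha.2, lt_min ha.2 (show a < a + ε by linarith)]
  have hlmem : l ∈ Set.Ioo (T / 3) (T / 2) := ⟨hl1, lt_trans hl2 ha.2⟩
  have humem : u ∈ Set.Ioo (T / 3) (T / 2) := ⟨lt_trans ha.1 hu1, hu2⟩
  have hGl : G l x1 < 0 := (hsign x1 hx1 l hlmem).1 hl2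
  have hGu : 0 < G u x1 := (hsign x1 hx1 u humem).2 hu1
  -- continuity of ξ ↦ G(l, ξ) and ξ ↦ G(u, ξ) at x1
  have hx1i : x1 ∈ Set.Ioo ξ1 ξ2 :=
    ⟨lt_of_le_of_lt hξb.1 hx1.1, lt_of_lt_of_le hx1.2 hξs.2⟩
  have hcontAt : ∀ θ : ℝ, ContinuousAt (fun ξ : ℝ => G θ ξ) x1 := by
    intro θ
    have e : (fun ξ : ℝ => G θ ξ) = fun ξ : ℝ => H θ ξ - H (-θ) ξ :=
      funext fun ξ => hG θ ξ
    rw [e]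
    have hco : ContinuousOn (fun ξ : ℝ => H θ ξ - H (-θ) ξ) (Set.Icc ξ1 ξ2) :=
      ((hC1 θ).continuousOn).sub ((hC1 (-θ)).continuousOn)
    exact hco.continuousAt (Icc_mem_nhds hx1i.1 hx1i.2)
  have hev : ∀ᶠ ξ in nhds x1, G l ξ < 0 ∧ 0 < G u ξ := by
    have h1' : ∀ᶠ ξ in nhds x1, G l ξ < 0 :=
      (hcontAt l).tendsto.eventually_lt_const hGl
    have h2' : ∀ᶠ ξ in nhds x1, 0 < G u ξ :=
      (hcontAt u).tendsto.eventually_const_lt hGu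
    exact h1'.and h2'
  rw [Metric.eventually_nhds_iff] at hev
  obtain ⟨δ, hδ, hball⟩ := hev
  refine ⟨δ, hδ, ?_⟩
  intro x2 hx2 hdist
  have hd : dist x2 x1 < δ := by
    rw [Real.dist_eq, abs_sub_comm]; exact hdist
  obtain ⟨hGl2, hGu2⟩ := hball hd
  obtain ⟨hb2, hb20⟩ := hθhat x2 hx2
  set b := θhat x2 with hbdef
  have hlb : l < b := by
    rcases lt_trichotomy l b with h | h | h
    · exact h
    · exfalso; rw [← h] at hb20; linarith
    · exfalso; have := (hsign x2 hx2 l hlmem).2 h; linarith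
  have hbu : b < u := by
    rcases lt_trichotomy b u with h | h | h
    · exact h
    · exfalso; rw [h] at hb20; linarith
    · exfalso; have := (hsign x2 hx2 u humem).1 h; linarith
  rw [abs_lt]
  constructor <;> [linarith; linarith]
end
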